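/- Let S ∈ ℝ^{d×m_s} be a selection matrix. Let B ∈ ℝ^{d×m}, C ∈ ℝ^{m×q}, N ∈ ℝ^{d×q}, and set R := B C − N. Assume C has compact SVD C = U Σ Vᵀ with pseudoinverse C⁺ := V Σ⁻¹ Uᵀ, and define B_new := B − S Sᵀ R C⁺. Then ‖B_new C − N‖_F² = ‖B C − N‖_F² − ‖Sᵀ R V‖_F²; in particular, if Sᵀ R V ≠ 0 then ‖B_new C − N‖_F < ‖B C − N‖_F. -/
import Mathlib


open Matrix

/-- Squared Frobenius norm of a real matrix. -/
noncomputable def frobSq {a b : ℕ} (A : Matrix (Fin a) (Fin b) ℝ) : ℝ :=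
  ∑ i, ∑ j, (A i j) ^ 2

lemma frobSq_eq_trace {a b : ℕ} (A : Matrix (Fin a) (Fin b) ℝ) :
    frobSq A = (Aᵀ * A).trace := by
  unfold frobSq
  rw [Finset.sum_comm]
  simp [Matrix.trace, Matrix.diag, Matrix.mul_apply, sq]

lemma frobSq_nonneg {a b : ℕ} (A : Matrix (Fin a) (Fin b) ℝ) : 0 ≤ frobSq A := by
  unfold frobSq; positivity

lemma frobSq_pos {a b : ℕ} (A : Matrix (Fin a) (Fin b) ℝ) (h : A ≠ 0) : 0 < frobSq A := by
  obtain ⟨i, j, hij⟩ : ∃ i j, A i j ≠ 0 := by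
    by_contra hc
    push_neg at hc
    exact h (by ext i j; simp [hc])
  have h1 : 0 < ∑ j, (A i j) ^ 2 :=
    Finset.sum_pos' (fun _ _ => sq_nonneg _) ⟨j, Finset.mem_univ j, by positivity⟩
  exact Finset.sum_pos' (fun _ _ => Finset.sum_nonneg fun _ _ => sq_nonneg _)
    ⟨i, Finset.mem_univ i, h1⟩

/-- EIM basis update with all columns: with `B_new = B − S Sᵀ R C⁺` one has
`‖B_new C − N‖_F² = ‖B C − N‖_F² − ‖Sᵀ R V‖_F²`; in particular the residual strictly
decreases whenever `Sᵀ R V ≠ 0`. -/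
theorem eim_update_residual_full
    (d ms m q c : ℕ)
    (ι : Fin ms → Fin d) (hι : Function.Injective ι)
    (S : Matrix (Fin d) (Fin ms) ℝ)
    (hS : S = Matrix.of fun i j => if i = ι j then (1 : ℝ) else 0)
    (B : Matrix (Fin d) (Fin m) ℝ) (C : Matrix (Fin m) (Fin q) ℝ)
    (N : Matrix (Fin d) (Fin q) ℝ)
    (R : Matrix (Fin d) (Fin q) ℝ) (hR : R = B * C - N)
    (U : Matrix (Fin m) (Fin c) ℝ) (Sg : Matrix (Fin c) (Fin c) ℝ)
    (V : Matrix (Fin q) (Fin c) ℝ)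
    (hU : Uᵀ * U = 1) (hV : Vᵀ * V = 1)
    (hSgDiag : Sg.IsDiag) (hSgPos : ∀ i, 0 < Sg i i)
    (hSVD : C = U * Sg * Vᵀ)
    (Cplus : Matrix (Fin q) (Fin m) ℝ) (hCplus : Cplus = V * Sg⁻¹ * Uᵀ)
    (Bnew : Matrix (Fin d) (Fin m) ℝ)
    (hBnew : Bnew = B - S * Sᵀ * R * Cplus) :
    frobSq (Bnew * C - N) = frobSq (B * C - N) - frobSq (Sᵀ * R * V) ∧
    (Sᵀ * R * V ≠ 0 →
      Real.sqrt (frobSq (Bnew * C - N)) < Real.sqrt (frobSq (B * C - N))) := by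
  have hStS : Sᵀ * S = 1 := by
    ext j k
    simp [hS, Matrix.mul_apply, Matrix.one_apply, hι.eq_iff, eq_comm]
  have hSgInv : Sg⁻¹ * Sg = 1 := by
    apply Matrix.nonsing_inv_mul
    have hdet : Sg.det = ∏ i, Sg i i := by
      conv_lhs => rw [← hSgDiag.diagonal_diag]
      simp [Matrix.det_diagonal, Matrix.diag]
    rw [hdet]
    exact (Finset.prod_pos fun i _ => hSgPos i).ne'.isUnit
  have hCpC : Cplus * C = V * Vᵀ := by
    rw [hCplus, hSVD]
    simp only [Matrix.mul_assoc]
    rw [← Matrix.mul_assoc Uᵀ U, hU, Matrix.one_mul, ← Matrix.mul_assoc Sg⁻¹ Sg, hSgInv,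
      Matrix.one_mul]
  set A := Sᵀ * R * V with hA
  have hW : Bnew * C - N = R - S * A * Vᵀ := by
    have e1 : S * Sᵀ * R * Cplus * C = S * A * Vᵀ := by
      rw [Matrix.mul_assoc (S * Sᵀ * R), hCpC, hA]
      simp only [Matrix.mul_assoc]
    rw [hBnew, Matrix.sub_mul, e1, hR]
    abel
  have t1 : (Rᵀ * (S * A * Vᵀ)).trace = (Aᵀ * A).trace := by
    rw [show Rᵀ * (S * A * Vᵀ) = (Rᵀ * S * A) * Vᵀ by simp only [Matrix.mul_assoc],
      Matrix.trace_mul_comm]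
    congr 1
    rw [hA]
    simp only [Matrix.transpose_mul, Matrix.transpose_transpose, Matrix.mul_assoc]
  have t2 : ((S * A * Vᵀ)ᵀ * R).trace = (Aᵀ * A).trace := by
    rw [show (S * A * Vᵀ)ᵀ * R = (Rᵀ * (S * A * Vᵀ))ᵀ by
      simp [Matrix.transpose_mul, Matrix.mul_assoc], Matrix.trace_transpose, t1]
  have t3 : ((S * A * Vᵀ)ᵀ * (S * A * Vᵀ)).trace = (Aᵀ * A).trace := by
    have e : (S * A * Vᵀ)ᵀ * (S * A * Vᵀ) = V * (Aᵀ * ((Sᵀ * S) * (A * Vᵀ))) := by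
      simp only [Matrix.transpose_mul, Matrix.transpose_transpose, Matrix.mul_assoc]
    rw [e, hStS, Matrix.one_mul, Matrix.trace_mul_comm,
      show Aᵀ * (A * Vᵀ) * V = (Aᵀ * A) * (Vᵀ * V) by simp only [Matrix.mul_assoc], hV,
      Matrix.mul_one]
  have expand : (R - S * A * Vᵀ)ᵀ * (R - S * A * Vᵀ)
      = Rᵀ * R - Rᵀ * (S * A * Vᵀ) - (S * A * Vᵀ)ᵀ * R + (S * A * Vᵀ)ᵀ * (S * A * Vᵀ) := by
    rw [Matrix.transpose_sub, Matrix.sub_mul, Matrix.mul_sub, Matrix.mul_sub]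
    abel
  have main : frobSq (Bnew * C - N) = frobSq (B * C - N) - frobSq A := by
    rw [frobSq_eq_trace, frobSq_eq_trace, frobSq_eq_trace, hW, ← hR, expand,
      Matrix.trace_add, Matrix.trace_sub, Matrix.trace_sub, t1, t2, t3]
    ring
  refine ⟨main, fun hne => ?_⟩
  apply Real.sqrt_lt_sqrt (frobSq_nonneg _)
  rw [main]
  have := frobSq_pos A hne
  linarith
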